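/- Let Θ ≥ 1, let a, b ∈ ℝ^Θ with a_i < b_i for all i, let U = {θ ∈ ℝ^Θ : a_i ≤ θ_i ≤ b_i for all i}, let f : ℝ^Θ → ℝ, and let T = {θ ∈ U : f(θ) ≤ f(θ') for all θ' ∈ U}. Let Υ : ℝ^Θ → ℝ^Θ map U into U. Suppose θ_min ∈ U, r > 0, and Θ_min ⊆ U is a set with θ_min ∈ Θ_min on which f is constant, such that Υ(θ) ∈ Θ_min for every θ ∈ U with ‖θ − θ_min‖₂ < r. If there exists θ ∈ U with Υ(θ) ∈ T and ‖θ − θ_min‖₂ < r, then θ_min ∈ T. -/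
import Mathlib


/-- RoA-filter step of the TRLwARoA algorithm. If the Euclidean ball of
radius `r` around a found local minimizer `θmin` (intersected with `U`) is mapped by the
solver `Υ` into a set `Θmin ⊆ U` of local minimizers on which `f` is constant and which
contains `θmin`, and if some `θ ∈ U` inside that ball satisfies `Υ θ ∈ T`, then `θmin`
itself is a global minimizer. -/
theorem stmt_4 (Θ : ℕ) (hΘ : 1 ≤ Θ) (a b : Fin Θ → ℝ) (hab : ∀ i, a i < b i)
    (U : Set (EuclideanSpace ℝ (Fin Θ))) (hU : U = {θ | ∀ i, a i ≤ θ i ∧ θ i ≤ b i})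
    (f : EuclideanSpace ℝ (Fin Θ) → ℝ)
    (T : Set (EuclideanSpace ℝ (Fin Θ))) (hT : T = {θ ∈ U | ∀ θ' ∈ U, f θ ≤ f θ'})
    (Υ : EuclideanSpace ℝ (Fin Θ) → EuclideanSpace ℝ (Fin Θ)) (hΥU : ∀ θ ∈ U, Υ θ ∈ U)
    (θmin : EuclideanSpace ℝ (Fin Θ)) (hθminU : θmin ∈ U) (r : ℝ) (hr : 0 < r)
    (Θmin : Set (EuclideanSpace ℝ (Fin Θ))) (hΘminU : Θmin ⊆ U) (hθmin : θmin ∈ Θmin)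
    (hconst : ∀ θ ∈ Θmin, ∀ θ' ∈ Θmin, f θ = f θ')
    (hRoA : ∀ θ ∈ U, ‖θ - θmin‖ < r → Υ θ ∈ Θmin)
    (hhit : ∃ θ ∈ U, Υ θ ∈ T ∧ ‖θ - θmin‖ < r) :
    θmin ∈ T := by
  obtain ⟨θ, hθU, hΥT, hlt⟩ := hhit
  have hmem : Υ θ ∈ Θmin := hRoA θ hθU hlt
  have heq : f θmin = f (Υ θ) := hconst θmin hθmin (Υ θ) hmem
  rw [hT] at hΥT ⊢
  exact ⟨hθminU, fun θ' hθ' => heq ▸ hΥT.2 θ' hθ'⟩
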